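/- arXiv:math/0412456 — 2 statements merged into one kernel-verified Lean document; each statement's English description precedes it below -/
import Mathlib

section
/- Every e-diagram equivalent to D_beta (i.e., having classifying signed permutation beta) dominates D_beta entrywise: if D ~ D_beta then every entry of the matrix D - D_beta is nonnegative, where diagrams are written with cells in the appropriate order. In particular D_beta is the unique minimal e-diagram in its equivalence class. -/
open scoped Classical

/-- The hyperoctahedral group `B_n`, modeled as pairs (permutation, sign vector),
i.e. the wreath product `ℤ₂ ≀ S_n`.  `β.2 i = true` means the entry at position `i`
is negative. -/
abbrev HO (n : ℕ) := Equiv.Perm (Fin n) × (Fin n → Bool)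

namespace HO

/-- The inverse signed permutation. -/
noncomputable def inv {n : ℕ} (β : HO n) : HO n := (β.1⁻¹, fun i => β.2 (β.1⁻¹ i))

/-- One-line notation (1-indexed): the signed value `β(i) ∈ {±1,…,±n}` for `1 ≤ i ≤ n`,
and `0` outside this range. -/
noncomputable def val {n : ℕ} (β : HO n) (i : ℕ) : ℤ :=
  if h : 1 ≤ i ∧ i ≤ n then
    (if β.2 ⟨i - 1, by omega⟩ then -(((β.1 ⟨i - 1, by omega⟩ : Fin n) : ℕ) + 1 : ℤ)
     else (((β.1 ⟨i - 1, by omega⟩ : Fin n) : ℕ) + 1 : ℤ))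
  else 0

/-- The order `-1 ≺ -2 ≺ ⋯ ≺ -n ≺ ⋯ ≺ 0 ≺ 1 ≺ 2 ≺ ⋯` on `ℤ`:
`bprec a b` means `a ≺ b`. -/
noncomputable def bprec (a b : ℤ) : Prop :=
  (a < 0 ∧ b < 0 ∧ -a < -b) ∨ (a < 0 ∧ 0 ≤ b) ∨ (0 ≤ a ∧ 0 ≤ b ∧ a < b)

/-- Descent set of `β` with respect to the order `≺`. -/
noncomputable def Des {n : ℕ} (β : HO n) : Finset ℕ :=
  (Finset.Icc 1 (n - 1)).filter fun i => bprec (val β (i + 1)) (val β i)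

/-- Rise set of `β` with respect to the order `≺`. -/
noncomputable def Ris {n : ℕ} (β : HO n) : Finset ℕ :=
  (Finset.Icc 1 (n - 1)).filter fun i => bprec (val β i) (val β (i + 1))

/-- Major index. -/
noncomputable def maj {n : ℕ} (β : HO n) : ℕ := ∑ i ∈ Des β, i

/-- Number of negative entries. -/
noncomputable def neg {n : ℕ} (β : HO n) : ℕ :=
  ((Finset.Icc 1 n).filter fun i => val β i < 0).card

/-- The flag-major index `fmaj β = 2 maj β + neg β`. -/
noncomputable def fmaj {n : ℕ} (β : HO n) : ℕ := 2 * maj β + neg β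

/-- `δ_i(β) = #{j ∈ Des(β) : j < i}`. -/
noncomputable def deltaStat {n : ℕ} (β : HO n) (i : ℕ) : ℕ := ((Des β).filter fun j => j < i).card

/-- `d_i(β) = #{j ∈ Des(β) : j ≥ i}`. -/
noncomputable def dStat {n : ℕ} (β : HO n) (i : ℕ) : ℕ := ((Des β).filter fun j => i ≤ j).card

/-- `ε_i(β) = 1` if `β(i) < 0`, else `0`. -/
noncomputable def epsStat {n : ℕ} (β : HO n) (i : ℕ) : ℕ := if val β i < 0 then 1 else 0

/-- `η_i(β) = 1` if `β(i) > 0`, else `0`. -/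
noncomputable def etaStat {n : ℕ} (β : HO n) (i : ℕ) : ℕ := if 0 < val β i then 1 else 0

/-- `g_i(β) = 2 δ_i(β) + η_i(β)`. -/
noncomputable def gstat {n : ℕ} (β : HO n) (i : ℕ) : ℕ := 2 * deltaStat β i + etaStat β i

/-- `f_i(β) = 2 d_i(β) + ε_i(β)` (so that `fmaj β = ∑ f_i(β)`). -/
noncomputable def fStat {n : ℕ} (β : HO n) (i : ℕ) : ℕ := 2 * dStat β i + epsStat β i

/-- `μ_i(β) = #{k ∈ Ris(β⁻¹) : k < i}`. -/
noncomputable def muStat {n : ℕ} (β : HO n) (i : ℕ) : ℕ := ((Ris (inv β)).filter fun k => k < i).card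

/-- `ĝ_i(β) = 2 μ_{σ(i)}(β) + ε_i(β)`, where `σ(i) = |β(i)|`. -/
noncomputable def ghat {n : ℕ} (β : HO n) (i : ℕ) : ℕ :=
  2 * muStat β (val β i).natAbs + epsStat β i

end HO

/-- The key used for the labelling (opposite-lexicographic) order on the cells of a
diagram `D : Fin n → ℕ × ℕ`: compare `b`, then `a`, then the index (to break ties). -/
noncomputable def okey {n : ℕ} (D : Fin n → ℕ × ℕ) (i : Fin n) : ℕ ×ₗ (ℕ ×ₗ ℕ) :=
  toLex ((D i).2, toLex ((D i).1, (i : ℕ)))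

/-- The label of the `i`-th cell of `D` (cells listed in reading = lex order):
its rank in the opposite-lexicographic labelling order. -/
noncomputable def labelOf {n : ℕ} (D : Fin n → ℕ × ℕ) (i : Fin n) : ℕ :=
  (Finset.univ.filter fun j : Fin n => okey D j ≤ okey D i).card

/-- The value at `i` of the classifying signed permutation `β(D)` of a diagram `D`
whose cells are listed in lex (reading) order: `β(D)(i) = (-1)^{a_i + 1} · label(i)`. -/
noncomputable def classifyVal {n : ℕ} (D : Fin n → ℕ × ℕ) (i : Fin n) : ℤ :=
  (if (D i).1 % 2 = 1 then 1 else -1) * (labelOf D i : ℤ)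

/-- The compact `e`-diagram `D_β = (g(β), g̃(β))`, with cells listed in reading order:
the `i`-th cell is `(g_i(β), g_{σ(i)}(β⁻¹))` where `σ(i) = |β(i)|`. -/
noncomputable def Dbeta {n : ℕ} (β : HO n) (i : Fin n) : ℕ × ℕ :=
  (HO.gstat β ((i : ℕ) + 1), HO.gstat (HO.inv β) (HO.val β ((i : ℕ) + 1)).natAbs)

/-!
If `β(D) = β`, the first coordinates of `D` in reading order are weakly increasing, strictly
increasing across the descents of `β`, and odd exactly at the positive entries of `β`; the
second coordinates, listed in label order, satisfy the same conditions with respect to `β⁻¹`.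
The sequence `g(β) = 2δ(β) + η(β)` is the least sequence with these properties: going from
`i` to `i + 1` it grows by `2` at a descent and is otherwise fixed up to parity, and a
descent never leads from a negative to a positive entry, so a parity change can never save
the increase a descent forces.
-/

namespace HO

variable {n : ℕ} (β : HO n)

lemma val_succ (i : Fin n) :
    val β ((i : ℕ) + 1) = if β.2 i then -((β.1 i : ℕ) + 1 : ℤ) else ((β.1 i : ℕ) + 1 : ℤ) := by
  rw [val, dif_pos ⟨by omega, i.isLt⟩]
  simp

lemma natAbs_val_succ (i : Fin n) : (val β ((i : ℕ) + 1)).natAbs = (β.1 i : ℕ) + 1 := by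
  rw [val_succ]
  split <;> omega

lemma etaStat_succ (i : Fin n) : etaStat β ((i : ℕ) + 1) = if β.2 i then 0 else 1 := by
  rw [etaStat, val_succ]
  split <;> split <;> omega

lemma etaStat_le_one (i : ℕ) : etaStat β i ≤ 1 := by
  unfold etaStat
  split <;> omega

lemma bprec_val_succ_iff {i j : Fin n} (h : β.2 i = β.2 j) :
    bprec (val β ((j : ℕ) + 1)) (val β ((i : ℕ) + 1)) ↔ β.1 j < β.1 i := by
  rw [val_succ, val_succ, ← h, Fin.lt_def, bprec]
  split <;> omega

lemma pos_of_bprec {a b : ℤ} (h : bprec a b) (ha : 0 < a) : 0 < b := by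
  unfold bprec at h
  omega

lemma bprec_of_mem_Des {i : ℕ} (h : i ∈ Des β) : bprec (val β (i + 1)) (val β i) :=
  (Finset.mem_filter.1 h).2

lemma etaStat_succ_le_of_mem_Des {i : ℕ} (h : i ∈ Des β) :
    etaStat β (i + 1) ≤ etaStat β i := by
  unfold etaStat
  split
  · rw [if_pos (pos_of_bprec (bprec_of_mem_Des β h) ‹_›)]
  · omega

lemma deltaStat_one : deltaStat β 1 = 0 := by
  rw [deltaStat, Finset.card_eq_zero, Finset.filter_eq_empty_iff]
  intro j hj
  have := (Finset.mem_Icc.1 (Finset.mem_filter.1 hj).1).1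
  omega

lemma deltaStat_succ (i : ℕ) :
    deltaStat β (i + 1) = deltaStat β i + if i ∈ Des β then 1 else 0 := by
  simp only [deltaStat, Nat.lt_succ_iff_lt_or_eq, Finset.filter_or]
  rw [Finset.card_union_of_disjoint (Finset.disjoint_filter.2 fun _ _ h => h.ne), Finset.filter_eq']
  split <;> simp

lemma gstat_succ_le_of_gstat_le {i x y : ℕ} (hx : gstat β i ≤ x) (hxy : x ≤ y)
    (hdes : i ∈ Des β → x < y) (hxpar : x % 2 = etaStat β i)
    (hypar : y % 2 = etaStat β (i + 1)) : gstat β (i + 1) ≤ y := by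
  unfold gstat at hx ⊢
  rw [deltaStat_succ]
  have := etaStat_le_one β i
  have := etaStat_le_one β (i + 1)
  split
  · have := etaStat_succ_le_of_mem_Des β ‹_›
    have := hdes ‹_›
    omega
  · omega

theorem gstat_succ_le_of_monotone (c : Fin n → ℕ) (hmono : Monotone c)
    (hstrict : ∀ i j : Fin n, (j : ℕ) = i + 1 → (i : ℕ) + 1 ∈ Des β → c i < c j)
    (hpar : ∀ i, c i % 2 = etaStat β ((i : ℕ) + 1)) (i : Fin n) :
    gstat β ((i : ℕ) + 1) ≤ c i := by
  obtain ⟨m, hm⟩ := i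
  induction m with
  | zero =>
    have := hpar ⟨0, hm⟩
    simp only [gstat, zero_add, deltaStat_one] at this ⊢
    omega
  | succ m ih =>
    exact gstat_succ_le_of_gstat_le β (ih (by omega)) (hmono (Fin.mk_le_mk.2 (by omega)))
      (hstrict ⟨m, by omega⟩ ⟨m + 1, hm⟩ rfl) (hpar _) (hpar ⟨m + 1, hm⟩)

end HO

section Diagram

variable {n : ℕ} (D : Fin n → ℕ × ℕ)

lemma labelOf_lt_labelOf_iff {i j : Fin n} : labelOf D i < labelOf D j ↔ okey D i < okey D j := by
  constructor
  · contrapose!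
    intro h
    exact Finset.card_le_card fun k hk => by
      simp only [Finset.mem_filter, Finset.mem_univ, true_and] at hk ⊢
      exact hk.trans h
  · intro h
    refine Finset.card_lt_card ((Finset.ssubset_iff_of_subset fun k hk => ?_).2 ⟨j, ?_, ?_⟩)
    · simp only [Finset.mem_filter, Finset.mem_univ, true_and] at hk ⊢
      exact hk.trans h.le
    · simp
    · simpa using h

lemma labelOf_le_labelOf_iff {i j : Fin n} :
    labelOf D i ≤ labelOf D j ↔ okey D i ≤ okey D j := by
  simpa only [not_lt] using (labelOf_lt_labelOf_iff D (i := j) (j := i)).not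

lemma okey_le_okey_iff {i j : Fin n} :
    okey D i ≤ okey D j ↔ (D i).2 < (D j).2 ∨
      (D i).2 = (D j).2 ∧ ((D i).1 < (D j).1 ∨ (D i).1 = (D j).1 ∧ (i : ℕ) ≤ j) := by
  simp only [okey, Prod.Lex.toLex_le_toLex]

lemma okey_lt_okey_iff {i j : Fin n} :
    okey D i < okey D j ↔ (D i).2 < (D j).2 ∨
      (D i).2 = (D j).2 ∧ ((D i).1 < (D j).1 ∨ (D i).1 = (D j).1 ∧ (i : ℕ) < j) := by
  simp only [okey, Prod.Lex.toLex_lt_toLex]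

lemma classifyVal_eq_val_succ_iff {β : HO n} {i : Fin n} :
    classifyVal D i = HO.val β ((i : ℕ) + 1) ↔
      labelOf D i = (β.1 i : ℕ) + 1 ∧ (β.2 i = true ↔ (D i).1 % 2 = 0) := by
  rw [classifyVal, HO.val_succ]
  split <;> split <;> simp_all <;> omega

variable {D} {β : HO n}

lemma gstat_le_fst (hsort : Monotone fun i => toLex (D i))
    (hlabel : ∀ i, labelOf D i = (β.1 i : ℕ) + 1) (hsign : ∀ i, β.2 i = true ↔ (D i).1 % 2 = 0)
    (i : Fin n) : HO.gstat β ((i : ℕ) + 1) ≤ (D i).1 := by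
  have hfst : Monotone fun i => (D i).1 := fun i j h => Prod.Lex.monotone_fst _ _ (hsort h)
  refine HO.gstat_succ_le_of_monotone β (fun i => (D i).1) hfst (fun i j hj hdes => ?_)
    (fun i => by rw [HO.etaStat_succ]; have := hsign i; split <;> simp_all) i
  by_contra! hle
  have hij : i ≤ j := Fin.le_def.2 (by omega)
  have hfst_eq : (D i).1 = (D j).1 := le_antisymm (hfst hij) hle
  have hsnd : (D i).2 ≤ (D j).2 := by
    have := Prod.Lex.toLex_le_toLex.1 (hsort hij)
    omega
  have hlab : β.1 i < β.1 j := by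
    rw [Fin.lt_def, ← Nat.add_lt_add_iff_right, ← hlabel, ← hlabel, labelOf_lt_labelOf_iff,
      okey_lt_okey_iff]
    omega
  have hsame : β.2 i = β.2 j := Bool.eq_iff_iff.2 (by rw [hsign, hsign, hfst_eq])
  have hdes' := HO.bprec_of_mem_Des β hdes
  rw [show (i : ℕ) + 1 + 1 = j + 1 by omega, HO.bprec_val_succ_iff β hsame] at hdes'
  exact lt_asymm hlab hdes'

lemma gstat_inv_le_snd (hsort : Monotone fun i => toLex (D i))
    (hlabel : ∀ i, labelOf D i = (β.1 i : ℕ) + 1) (hsign : ∀ i, β.2 i = true ↔ (D i).1 % 2 = 0)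
    (hpar : ∀ i, (D i).1 % 2 = (D i).2 % 2) (i : Fin n) :
    HO.gstat (HO.inv β) ((β.1 i : ℕ) + 1) ≤ (D i).2 := by
  have hlabel_inv (k : Fin n) : labelOf D (β.1⁻¹ k) = (k : ℕ) + 1 := by simp [hlabel]
  have hkey := HO.gstat_succ_le_of_monotone (HO.inv β) (fun k => (D (β.1⁻¹ k)).2) ?mono ?strict
    ?par (β.1 i)
  · simpa using hkey
  case mono =>
    intro k l hkl
    have hle : okey D (β.1⁻¹ k) ≤ okey D (β.1⁻¹ l) := by
      rw [← labelOf_le_labelOf_iff, hlabel_inv, hlabel_inv]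
      exact Nat.add_le_add_right hkl 1
    rw [okey_le_okey_iff] at hle
    dsimp only
    omega
  case strict =>
    intro k l hl hdes
    by_contra! hle
    have hlt : okey D (β.1⁻¹ k) < okey D (β.1⁻¹ l) := by
      rw [← labelOf_lt_labelOf_iff, hlabel_inv, hlabel_inv]
      omega
    rw [okey_lt_okey_iff] at hlt
    have hsame : (HO.inv β).2 k = (HO.inv β).2 l := Bool.eq_iff_iff.2 <| by
      change β.2 (β.1⁻¹ k) = true ↔ β.2 (β.1⁻¹ l) = true
      have := hpar (β.1⁻¹ k)
      have := hpar (β.1⁻¹ l)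
      rw [hsign, hsign]
      omega
    have hdes' := HO.bprec_of_mem_Des _ hdes
    rw [show (k : ℕ) + 1 + 1 = l + 1 by omega, HO.bprec_val_succ_iff _ hsame] at hdes'
    change β.1⁻¹ l < β.1⁻¹ k at hdes'
    have := Prod.Lex.toLex_le_toLex.1 (hsort hdes'.le)
    rw [Fin.lt_def] at hdes'
    omega
  case par =>
    intro k
    rw [HO.etaStat_succ]
    change (D (β.1⁻¹ k)).2 % 2 = if β.2 (β.1⁻¹ k) then 0 else 1
    have := hsign (β.1⁻¹ k)
    have := hpar (β.1⁻¹ k)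
    split <;> simp_all

end Diagram

/-- every `e`-diagram `D` equivalent to `D_β` (i.e. with classifying
signed permutation `β`) dominates `D_β` entrywise; in particular `D_β` is the unique
minimal `e`-diagram in its equivalence class. -/
theorem Dbeta_minimal (n : ℕ) (β : HO n) (D : Fin n → ℕ × ℕ)
    (hsort : Monotone fun i => toLex (D i))
    (heven : ∀ i, ((D i).1 + (D i).2) % 2 = 0)
    (hclass : ∀ i : Fin n, classifyVal D i = HO.val β ((i : ℕ) + 1)) :
    ∀ i : Fin n, (Dbeta β i).1 ≤ (D i).1 ∧ (Dbeta β i).2 ≤ (D i).2 := by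
  have hdecode i := (classifyVal_eq_val_succ_iff D).1 (hclass i)
  have hlabel i := (hdecode i).1
  have hsign i := (hdecode i).2
  intro i
  refine ⟨gstat_le_fst hsort hlabel hsign i, ?_⟩
  rw [Dbeta, HO.natAbs_val_succ]
  exact gstat_inv_le_snd hsort hlabel hsign (fun i => by have := heven i; omega) i
end

section
/- For each beta in B_n, the image of the compact e-diagram under psi equals the compact o-diagram: psi(D_beta) = D_beta^s, where psi sends (g(beta), g~(beta)) to (g(beta), c(beta) - g~(beta)) with c_i(beta) = 2|beta(i)| - 1; in particular all cells of psi(D_beta) have odd coordinate sum and are distinct. -/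
/-!
Every position below `k` is a descent or a rise, so `δ_k(β⁻¹) + μ_k(β) = k - 1`; since `β⁻¹`
sends `|β(i)|` to `±i` with the sign of `β(i)`, this gives `ĝ_i + g̃_i = 2|β(i)| - 1`, and
`g_i + ĝ_i` is odd because exactly one of `η_i`, `ε_i` is `1`.

If positions `i < j` have equal cells, equal `g` means `β` has no descent in `[i, j)` and
`β(i)`, `β(j)` have the same sign, so `β(i) ≺ β(j)` forces `|β(i)| < |β(j)|`. Equal `ĝ` then means
`β⁻¹` has no rise in `[|β(i)|, |β(j)|)`, so `±j = β⁻¹(|β(j)|) ≺ β⁻¹(|β(i)|) = ±i` with equal signs,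
that is `j < i`.
-/

open scoped Classical

theorem Nat.rel_of_forall_Ico_rel_succ {α : Type*} (r : α → α → Prop) [IsTrans α r]
    {f : ℕ → α} {a b : ℕ} (h : ∀ k, a ≤ k → k < b → r (f k) (f (k + 1))) (hab : a < b) :
    r (f a) (f b) := by
  induction b, hab using Nat.le_induction with
  | base => exact h a le_rfl (Nat.lt_add_one a)
  | succ b hab ih =>
    exact _root_.trans (ih fun k hk hkb => h k hk (by omega)) (h b (by omega) b.lt_add_one)

theorem Finset.notMem_of_card_filter_lt_eq {s : Finset ℕ} {a b k : ℕ}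
    (h : (s.filter fun x => x < a).card = (s.filter fun x => x < b).card) (hak : a ≤ k)
    (hkb : k < b) : k ∉ s := by
  intro hks
  have hsub : s.filter (fun x => x < a) ⊆ s.filter (fun x => x < b) := fun x hx => by
    simp only [Finset.mem_filter] at hx ⊢; exact ⟨hx.1, by omega⟩
  have hk : k ∈ s.filter (fun x => x < b) := Finset.mem_filter.2 ⟨hks, hkb⟩
  rw [← Finset.eq_of_subset_of_card_le hsub h.ge] at hk
  exact absurd (Finset.mem_filter.1 hk).2 (by omega)

namespace HO

instance : IsTrans ℤ bprec := ⟨fun _ _ _ => by unfold bprec; omega⟩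

theorem bprec_asymm {a b : ℤ} (hab : bprec a b) (hba : bprec b a) : False := by
  unfold bprec at *; omega

theorem bprec_or_bprec_of_ne {a b : ℤ} (h : a ≠ b) : bprec a b ∨ bprec b a := by
  unfold bprec; omega

theorem natAbs_lt_natAbs_of_bprec {a b : ℤ} (h : bprec a b) (hs : a < 0 ↔ b < 0) :
    a.natAbs < b.natAbs := by
  unfold bprec at h; omega

variable {n : ℕ}

theorem exists_fin_add_one_eq {i : ℕ} (hi : i ∈ Finset.Icc 1 n) : ∃ x : Fin n, i = x + 1 := by
  rw [Finset.mem_Icc] at hi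
  exact ⟨⟨i - 1, by omega⟩, by simp only; omega⟩

theorem val_fin_add_one (β : HO n) (x : Fin n) :
    val β (x + 1) =
      if β.2 x then -((β.1 x : ℕ) + 1 : ℤ) else ((β.1 x : ℕ) + 1 : ℤ) := by
  rw [val, dif_pos ⟨by omega, x.isLt⟩]
  simp

theorem natAbs_val_fin_add_one (β : HO n) (x : Fin n) :
    (val β (x + 1)).natAbs = (β.1 x : ℕ) + 1 := by
  rw [val_fin_add_one]; split <;> omega

theorem val_fin_add_one_neg_iff (β : HO n) (x : Fin n) : val β (x + 1) < 0 ↔ β.2 x = true := by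
  rw [val_fin_add_one]; split <;> simp_all <;> omega

section Position

variable (β : HO n) {i : ℕ} (hi : i ∈ Finset.Icc 1 n)
include hi

theorem val_ne_zero : val β i ≠ 0 := by
  obtain ⟨x, rfl⟩ := exists_fin_add_one_eq hi
  have := natAbs_val_fin_add_one β x
  omega

theorem natAbs_val_mem_Icc : (val β i).natAbs ∈ Finset.Icc 1 n := by
  obtain ⟨x, rfl⟩ := exists_fin_add_one_eq hi
  rw [natAbs_val_fin_add_one, Finset.mem_Icc]
  exact ⟨by omega, (β.1 x).isLt⟩

theorem val_inv_natAbs_val :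
    val (inv β) (val β i).natAbs = if val β i < 0 then -(i : ℤ) else i := by
  obtain ⟨x, rfl⟩ := exists_fin_add_one_eq hi
  rw [natAbs_val_fin_add_one, val_fin_add_one (inv β) (β.1 x)]
  simp [inv, val_fin_add_one_neg_iff]

theorem epsStat_add_etaStat : epsStat β i + etaStat β i = 1 := by
  have := val_ne_zero β hi
  unfold epsStat etaStat
  split_ifs <;> omega

theorem etaStat_inv_natAbs_val : etaStat (inv β) (val β i).natAbs = etaStat β i := by
  unfold etaStat
  rw [val_inv_natAbs_val β hi]
  have := val_ne_zero β hi
  have : 0 < (i : ℤ) := by simp only [Finset.mem_Icc] at hi; omega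
  split_ifs <;> omega

end Position

theorem val_injOn (β : HO n) : Set.InjOn (val β) (Finset.Icc 1 n) := by
  intro i hi j hj h
  obtain ⟨x, rfl⟩ := exists_fin_add_one_eq hi
  obtain ⟨y, rfl⟩ := exists_fin_add_one_eq hj
  have habs := congrArg Int.natAbs h
  rw [natAbs_val_fin_add_one, natAbs_val_fin_add_one] at habs
  have : x = y := β.1.injective (Fin.ext (by omega))
  rw [this]

theorem mem_Des_or_mem_Ris (γ : HO n) {k : ℕ} (hk : k ∈ Finset.Icc 1 (n - 1)) :
    k ∈ Des γ ∨ k ∈ Ris γ := by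
  have hk' := Finset.mem_Icc.1 hk
  have hne : val γ (k + 1) ≠ val γ k := fun h => by
    have := val_injOn γ (Finset.mem_Icc.2 ⟨by omega, by omega⟩)
      (Finset.mem_Icc.2 ⟨by omega, by omega⟩) h
    omega
  simp only [Des, Ris, Finset.mem_filter]
  exact (bprec_or_bprec_of_ne hne).imp (⟨hk, ·⟩) (⟨hk, ·⟩)

theorem disjoint_Des_Ris (γ : HO n) : Disjoint (Des γ) (Ris γ) :=
  Finset.disjoint_left.2 fun _ hd hr =>
    bprec_asymm (Finset.mem_filter.1 hd).2 (Finset.mem_filter.1 hr).2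

theorem Des_union_Ris (γ : HO n) : Des γ ∪ Ris γ = Finset.Icc 1 (n - 1) :=
  (Finset.union_subset (Finset.filter_subset _ _) (Finset.filter_subset _ _)).antisymm
    fun _ hk => Finset.mem_union.2 (mem_Des_or_mem_Ris γ hk)

theorem deltaStat_add_card_filter_Ris (γ : HO n) {k : ℕ} (hk : k ≤ n) :
    deltaStat γ k + ((Ris γ).filter fun j => j < k).card = k - 1 := by
  rw [deltaStat, ← Finset.card_union_of_disjoint
    (Finset.disjoint_filter_filter (disjoint_Des_Ris γ)), ← Finset.filter_union, Des_union_Ris]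
  have : (Finset.Icc 1 (n - 1)).filter (fun j => j < k) = Finset.Icc 1 (k - 1) := by
    ext j; simp only [Finset.mem_filter, Finset.mem_Icc]; omega
  rw [this, Nat.card_Icc]
  omega

theorem bprec_val_of_deltaStat_eq (γ : HO n) {i j : ℕ} (hi : 1 ≤ i) (hj : j ≤ n)
    (hij : i < j) (h : deltaStat γ i = deltaStat γ j) : bprec (val γ i) (val γ j) := by
  refine Nat.rel_of_forall_Ico_rel_succ bprec (fun k hik hkj => ?_) hij
  have hk : k ∈ Finset.Icc 1 (n - 1) := by simp only [Finset.mem_Icc]; omega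
  have hk_notMem : k ∉ Des γ := Finset.notMem_of_card_filter_lt_eq h hik hkj
  exact (Finset.mem_filter.1 ((mem_Des_or_mem_Ris γ hk).resolve_left hk_notMem)).2

theorem bprec_val_of_card_filter_Ris_eq (γ : HO n) {i j : ℕ} (hi : 1 ≤ i) (hj : j ≤ n)
    (hij : i < j)
    (h : ((Ris γ).filter fun x => x < i).card = ((Ris γ).filter fun x => x < j).card) :
    bprec (val γ j) (val γ i) := by
  refine Nat.rel_of_forall_Ico_rel_succ (Function.swap bprec) (fun k hik hkj => ?_) hij
  have hk : k ∈ Finset.Icc 1 (n - 1) := by simp only [Finset.mem_Icc]; omega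
  have hk_notMem : k ∉ Ris γ := Finset.notMem_of_card_filter_lt_eq h hik hkj
  exact (Finset.mem_filter.1 ((mem_Des_or_mem_Ris γ hk).resolve_right hk_notMem)).2

theorem etaStat_le_one_s19 (γ : HO n) (i : ℕ) : etaStat γ i ≤ 1 := by
  unfold etaStat; split <;> omega

theorem epsStat_le_one (γ : HO n) (i : ℕ) : epsStat γ i ≤ 1 := by
  unfold epsStat; split <;> omega

theorem gstat_eq_gstat_iff (γ : HO n) {i j : ℕ} :
    gstat γ i = gstat γ j ↔
      deltaStat γ i = deltaStat γ j ∧ etaStat γ i = etaStat γ j := by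
  have := etaStat_le_one_s19 γ i
  have := etaStat_le_one_s19 γ j
  unfold gstat; omega

theorem ghat_eq_ghat_iff (β : HO n) {i j : ℕ} :
    ghat β i = ghat β j ↔
      muStat β (val β i).natAbs = muStat β (val β j).natAbs ∧
        epsStat β i = epsStat β j := by
  have := epsStat_le_one β i
  have := epsStat_le_one β j
  unfold ghat; omega

theorem val_neg_iff_etaStat_eq_zero (β : HO n) {i : ℕ} (hi : i ∈ Finset.Icc 1 n) :
    val β i < 0 ↔ etaStat β i = 0 := by
  have := val_ne_zero β hi
  unfold etaStat; split <;> omega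

theorem not_lt_of_gstat_eq_of_ghat_eq (β : HO n) {i j : ℕ} (hi : i ∈ Finset.Icc 1 n)
    (hj : j ∈ Finset.Icc 1 n) (hg : gstat β i = gstat β j) (hh : ghat β i = ghat β j) :
    ¬ i < j := by
  intro hij
  have hi' := Finset.mem_Icc.1 hi
  have hj' := Finset.mem_Icc.1 hj
  obtain ⟨hδ, hη⟩ := (gstat_eq_gstat_iff β).1 hg
  obtain ⟨hμ, -⟩ := (ghat_eq_ghat_iff β).1 hh
  have hsign : val β i < 0 ↔ val β j < 0 := by
    rw [val_neg_iff_etaStat_eq_zero β hi, val_neg_iff_etaStat_eq_zero β hj, hη]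
  have hσ : (val β i).natAbs < (val β j).natAbs := natAbs_lt_natAbs_of_bprec
    (bprec_val_of_deltaStat_eq β hi'.1 hj'.2 hij hδ) hsign
  have hσi := Finset.mem_Icc.1 (natAbs_val_mem_Icc β hi)
  have hσj := Finset.mem_Icc.1 (natAbs_val_mem_Icc β hj)
  have hinv := bprec_val_of_card_filter_Ris_eq (inv β) hσi.1 hσj.2 hσ hμ
  rw [val_inv_natAbs_val β hi, val_inv_natAbs_val β hj] at hinv
  have := natAbs_lt_natAbs_of_bprec hinv (by split_ifs <;> omega)
  split_ifs at this <;> omega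

theorem eq_of_gstat_eq_of_ghat_eq (β : HO n) {i j : ℕ} (hi : i ∈ Finset.Icc 1 n)
    (hj : j ∈ Finset.Icc 1 n) (hg : gstat β i = gstat β j) (hh : ghat β i = ghat β j) :
    i = j :=
  le_antisymm (not_lt.1 (not_lt_of_gstat_eq_of_ghat_eq β hj hi hg.symm hh.symm))
    (not_lt.1 (not_lt_of_gstat_eq_of_ghat_eq β hi hj hg hh))

end HO

/-- `ψ(D_β) = D_β^s`.  Writing `σ(i) = |β(i)|` and `c_i(β) = 2σ(i) - 1`,
the second coordinates satisfy `ĝ_i(β) + g̃_i(β) = c_i(β)` (so `c(β) - g̃(β) = ĝ(β)`),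
all cells `(g_i(β), ĝ_i(β))` have odd coordinate sum, and they are pairwise distinct. -/
theorem psi_compact_e_diagram_eq_compact_o_diagram (n : ℕ) (β : HO n) :
    (∀ i ∈ Finset.Icc 1 n,
        HO.ghat β i + HO.gstat (HO.inv β) (HO.val β i).natAbs
          = 2 * (HO.val β i).natAbs - 1) ∧
    (∀ i ∈ Finset.Icc 1 n, (HO.gstat β i + HO.ghat β i) % 2 = 1) ∧
    (∀ i ∈ Finset.Icc 1 n, ∀ j ∈ Finset.Icc 1 n,
        (HO.gstat β i, HO.ghat β i) = (HO.gstat β j, HO.ghat β j) → i = j) := by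
  refine ⟨fun i hi => ?_, fun i hi => ?_, fun i hi j hj h => ?_⟩
  · have hσ := Finset.mem_Icc.1 (HO.natAbs_val_mem_Icc β hi)
    have hδμ := HO.deltaStat_add_card_filter_Ris (HO.inv β) hσ.2
    have hεη := HO.epsStat_add_etaStat β hi
    have hη := HO.etaStat_inv_natAbs_val β hi
    unfold HO.ghat HO.gstat HO.muStat
    omega
  · have hεη := HO.epsStat_add_etaStat β hi
    unfold HO.gstat HO.ghat
    omega
  · obtain ⟨hg, hh⟩ := Prod.ext_iff.1 h
    exact HO.eq_of_gstat_eq_of_ghat_eq β hi hj hg hh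
end
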